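/- arXiv:1407.0967 — 5 statements merged into one kernel-verified Lean document; each statement's English description precedes it below -/
import Mathlib

section
/- Let p > 3 be a prime. Then for every integer x, ∑_{k=1}^{p-1} g_k(x)/k ≡ 0 (mod p). -/
/-- `g n x = ∑_{k=0}^n (n choose k)² (2k choose k) xᵏ`. -/
def g (x : ℤ) (n : ℕ) : ℤ :=
  ∑ k ∈ Finset.range (n + 1), (n.choose k : ℤ) ^ 2 * ((2 * k).choose k : ℤ) * x ^ k

/-- For rationals, `a ≡ b (mod p^m)` means the p-adic valuation of `a - b` is at least `m`. -/
def ratCongr (p m : ℕ) (a b : ℚ) : Prop :=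
  a = b ∨ (m : ℤ) ≤ padicValRat p (a - b)

/-!
Expanding `g_k(x)` and exchanging the sums, the sum is `∑_j C(2j,j) xʲ ∑_k C(k,j)²/k` modulo `p`.
If `p ≤ 2j < 2p` then `p ∣ C(2j,j)`. Otherwise `(j!)² C(k,j)²/k` is the value at `k` of a
polynomial of degree `2j - 1 < p - 1` for `j ≥ 1`, and `1/k` for `j = 0`; in both cases the sum
over all of `𝔽_p` vanishes, and the term `k = 0` contributes nothing because `0⁻¹ = 0`.
The rational statement follows by clearing the denominators, which are prime to `p`.
-/

open Finset Polynomial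

section FiniteField

variable {K : Type*} [Field K] [Fintype K]

theorem FiniteField.sum_inv_eq_zero (hK : 2 < Fintype.card K) : ∑ y : K, y⁻¹ = 0 := by
  rw [Fintype.sum_equiv (Equiv.inv K) (·⁻¹) id fun _ => rfl]
  simpa using FiniteField.sum_pow_lt_card_sub_one K 1 (by omega)

theorem FiniteField.sum_eval_eq_zero {Q : K[X]} (hQ : Q.natDegree < Fintype.card K - 1) :
    ∑ y : K, Q.eval y = 0 := by
  simp_rw [eval_eq_sum_range, Finset.sum_comm (s := univ), ← mul_sum]
  refine sum_eq_zero fun i hi => ?_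
  rw [FiniteField.sum_pow_lt_card_sub_one K i (by rw [mem_range] at hi; omega), mul_zero]

theorem FiniteField.sum_descPochhammer_eval_sq_div_eq_zero {j : ℕ} (hK : 2 < Fintype.card K)
    (hj : 2 * j < Fintype.card K) : ∑ y : K, (descPochhammer K j).eval y ^ 2 / y = 0 := by
  cases j with
  | zero => simpa using sum_inv_eq_zero hK
  | succ i =>
    have hmonic : ((descPochhammer K i).comp (X - C 1)).Monic :=
      (monic_descPochhammer K i).comp_X_sub_C 1
    have hdeg : (X * ((descPochhammer K i).comp (X - C 1)) ^ 2).natDegree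
        < Fintype.card K - 1 := by
      rw [natDegree_mul X_ne_zero (pow_ne_zero 2 hmonic.ne_zero), natDegree_pow, natDegree_comp,
        descPochhammer_natDegree, natDegree_X_sub_C, natDegree_X]
      omega
    rw [← sum_eval_eq_zero hdeg]
    refine sum_congr rfl fun y _ => ?_
    rw [descPochhammer_succ_left, ← C_1, eval_mul, eval_mul, eval_pow, eval_X]
    rcases eq_or_ne y 0 with rfl | hy
    · simp
    · field_simp

end FiniteField

theorem ZMod.sum_range_natCast {M : Type*} [AddCommMonoid M] (n : ℕ) [NeZero n]
    (f : ZMod n → M) : ∑ k ∈ range n, f k = ∑ y, f y :=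
  sum_nbij' (↑) ZMod.val (fun _ _ => mem_univ _) (fun y _ => mem_range.2 y.val_lt)
    (fun _ hk => ZMod.val_cast_of_lt (mem_range.1 hk)) (fun y _ => ZMod.natCast_zmod_val y)
    (fun _ _ => rfl)

section ZModPrime

variable {p : ℕ} [Fact p.Prime]

theorem sum_range_choose_sq_div_eq_zero (hp : p ≠ 2) {j : ℕ} (hj : 2 * j < p) :
    ∑ k ∈ range p, (k.choose j : ZMod p) ^ 2 / k = 0 := by
  have hfac : (j.factorial : ZMod p) ≠ 0 := by
    rw [Ne, ZMod.natCast_eq_zero_iff, (Fact.out : p.Prime).dvd_factorial]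
    omega
  have hp2 : 2 < p := lt_of_le_of_ne (Fact.out : p.Prime).two_le hp.symm
  have h := FiniteField.sum_descPochhammer_eval_sq_div_eq_zero (K := ZMod p) (j := j)
    (by rwa [ZMod.card]) (by rwa [ZMod.card])
  simp_rw [← ZMod.sum_range_natCast, descPochhammer_eval_eq_descFactorial,
    Nat.descFactorial_eq_factorial_mul_choose, Nat.cast_mul, mul_pow, mul_div_assoc,
    ← mul_sum] at h
  exact (mul_eq_zero.1 h).resolve_left (pow_ne_zero 2 hfac)

theorem sum_range_g_div_eq_zero (hp : p ≠ 2) (x : ℤ) :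
    ∑ k ∈ range p, (g x k : ZMod p) / k = 0 := by
  have hg : ∀ k ∈ range p, (g x k : ZMod p) =
      ∑ j ∈ range p, (k.choose j : ZMod p) ^ 2 * ((2 * j).choose j : ZMod p) * (x : ZMod p) ^ j := by
    intro k hk
    push_cast [g]
    refine sum_subset (range_subset_range.2 (mem_range.1 hk)) fun j _ hj => ?_
    simp [Nat.choose_eq_zero_of_lt (not_lt.1 (mt mem_range.2 hj))]
  calc ∑ k ∈ range p, (g x k : ZMod p) / k
      = ∑ j ∈ range p, ((2 * j).choose j : ZMod p) * (x : ZMod p) ^ j *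
          ∑ k ∈ range p, (k.choose j : ZMod p) ^ 2 / k := by
        rw [sum_congr rfl fun k hk => by rw [hg k hk, sum_div], sum_comm]
        refine sum_congr rfl fun j _ => ?_
        rw [mul_sum]
        exact sum_congr rfl fun k _ => by ring
    _ = 0 := by
        refine sum_eq_zero fun j hj => ?_
        rcases lt_or_ge (2 * j) p with h2j | h2j
        · rw [sum_range_choose_sq_div_eq_zero hp h2j, mul_zero]
        · have hjp := mem_range.1 hj
          have hcentral : ((2 * j).choose j : ZMod p) = 0 := by
            rw [ZMod.natCast_eq_zero_iff]
            exact (Fact.out : p.Prime).dvd_choose hjp (by omega) h2j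
          rw [hcentral, zero_mul, zero_mul]

end ZModPrime

theorem Finset.sum_div_eq_sum_mul_prod_erase_div_prod {ι K : Type*} [Field K] [DecidableEq ι]
    (s : Finset ι) (a b : ι → K) (hb : ∀ i ∈ s, b i ≠ 0) :
    ∑ i ∈ s, a i / b i = (∑ i ∈ s, a i * ∏ j ∈ s.erase i, b j) / ∏ i ∈ s, b i := by
  rw [sum_div]
  refine sum_congr rfl fun i hi => ?_
  rw [← mul_prod_erase s b hi,
    mul_div_mul_right _ _ (prod_ne_zero_iff.2 fun j hj => hb j (mem_of_mem_erase hj))]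

section RatCongr

variable {p : ℕ} [Fact p.Prime]

theorem ratCongr_one_intCast_div_natCast {N : ℤ} {D : ℕ} (hN : (p : ℤ) ∣ N) (hD : ¬ p ∣ D) :
    ratCongr p 1 ((N : ℚ) / D) 0 := by
  rcases eq_or_ne N 0 with rfl | hN0
  · simp [ratCongr]
  have hD0 : D ≠ 0 := by
    rintro rfl
    exact hD (dvd_zero p)
  right
  rw [sub_zero, padicValRat.div (by exact_mod_cast hN0) (by exact_mod_cast hD0),
    padicValRat.of_int, padicValRat.of_nat, padicValNat.eq_zero_of_not_dvd hD, Nat.cast_zero,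
    sub_zero]
  exact_mod_cast ((padicValInt_dvd_iff 1 N).1 (by simpa using hN)).resolve_left hN0

theorem ratCongr_one_sum_div {ι : Type*} [DecidableEq ι] (s : Finset ι) (a : ι → ℤ) (b : ι → ℕ)
    (hb : ∀ i ∈ s, ¬ p ∣ b i) (h : ∑ i ∈ s, (a i : ZMod p) / b i = 0) :
    ratCongr p 1 (∑ i ∈ s, (a i : ℚ) / b i) 0 := by
  have hbp : ∀ i ∈ s, (b i : ZMod p) ≠ 0 := fun i hi =>
    (ZMod.natCast_eq_zero_iff _ _).not.2 (hb i hi)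
  have hbq : ∀ i ∈ s, (b i : ℚ) ≠ 0 := fun i hi =>
    Nat.cast_ne_zero.2 fun h0 => hb i hi (h0 ▸ dvd_zero p)
  have hD : ¬ p ∣ ∏ i ∈ s, b i := fun hdvd => by
    obtain ⟨i, hi, hpi⟩ := (Nat.prime_iff.1 Fact.out).dvd_finsetProd_iff b |>.1 hdvd
    exact hb i hi hpi
  rw [sum_div_eq_sum_mul_prod_erase_div_prod s _ _ hbp, div_eq_zero_iff,
    or_iff_left (prod_ne_zero_iff.2 hbp)] at h
  rw [sum_div_eq_sum_mul_prod_erase_div_prod s _ _ hbq]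
  exact_mod_cast ratCongr_one_intCast_div_natCast (p := p)
    (N := ∑ i ∈ s, a i * ∏ j ∈ s.erase i, (b j : ℤ)) (D := ∏ i ∈ s, b i)
    (by rw [← ZMod.intCast_zmod_eq_zero_iff_dvd]; push_cast; exact h) hD

end RatCongr

theorem sum_g_div_k (p : ℕ) (hp : p.Prime) (hp3 : 3 < p) (x : ℤ) :
    ratCongr p 1 (∑ k ∈ Finset.Icc 1 (p - 1), (g x k : ℚ) / (k : ℚ)) 0 := by
  have := Fact.mk hp
  have hcoprime : ∀ k ∈ Icc 1 (p - 1), ¬ p ∣ k := fun k hk =>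
    Nat.not_dvd_of_pos_of_lt (mem_Icc.1 hk).1 (by grind)
  refine ratCongr_one_sum_div _ (g x) (fun k => k) hcoprime ?_
  rw [← sum_range_g_div_eq_zero (p := p) (by omega) x]
  refine sum_subset (fun k hk => by grind) fun k hk hk' => ?_
  obtain rfl : k = 0 := by grind
  simp
end

section
/- For every positive integer n, ∑_{k=0}^{n-1} (3k+1)·f_k·8^{n-1-k} = n²·∑_{k=0}^{n-1} (n−1 choose k)³·(1 − n/(k+1) + n²/(k+1)²), as an identity of rational numbers. -/
/-!
Write `m = n - 1`, `a = C(m, k)` and `c = C(m, k + 1)`. Pascal's rule in the form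
`(k + 1) (a + c) = (m + 1) a` turns the `k`-th summand on the right into `a³ + a²c + ac²`, and
`3 (a³ + a²c + ac²) = (a + c)³ - c³ + 2a³` sums to `f_n + f_{n-1}`, so the right side is
`n² (f_n + f_{n-1}) / 3`. The left side `L_n` satisfies `L_{n+1} = 8 L_n + (3n + 1) f_n`, and
`n² (f_n + f_{n-1}) / 3` satisfies the same recursion precisely because of Franel's recurrence
`(n + 1)² f_{n+1} = (7n² + 7n + 2) f_n + 8n² f_{n-1}`, which is proved by creative telescoping.
-/

/-- The Franel numbers `f n = ∑_{k=0}^n (n choose k)³`. -/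
def franel (n : ℕ) : ℤ := ∑ k ∈ Finset.range (n + 1), (n.choose k : ℤ) ^ 3

open Finset Nat

section

variable {R : Type*} [CommRing R]

lemma cast_franel_eq_sum_range {n N : ℕ} (h : n < N) :
    (franel n : R) = ∑ k ∈ range N, (n.choose k : R) ^ 3 := by
  rw [franel]
  push_cast
  refine sum_subset (range_subset_range.2 h) fun k _ hk ↦ ?_
  rw [choose_eq_zero_of_lt (by simpa using hk)]
  simp

lemma cast_franel_eq_sum_range_choose_succ {n N : ℕ} (h : n ≤ N) :
    (franel n : R) = ∑ k ∈ range N, (n.choose (k + 1) : R) ^ 3 + 1 := by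
  rw [cast_franel_eq_sum_range (lt_succ_of_le h), sum_range_succ']
  simp

lemma three_mul_sum_choose_cube_add (m : ℕ) :
    3 * ∑ k ∈ range (m + 1), ((m.choose k : R) ^ 3 + (m.choose k : R) ^ 2 * m.choose (k + 1)
        + m.choose k * (m.choose (k + 1) : R) ^ 2)
      = franel (m + 1) + franel m := by
  calc
    _ = ∑ k ∈ range (m + 1), ((m + 1).choose (k + 1) : R) ^ 3
          - ∑ k ∈ range (m + 1), (m.choose (k + 1) : R) ^ 3
          + 2 * ∑ k ∈ range (m + 1), (m.choose k : R) ^ 3 := by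
      simp only [choose_succ_succ', cast_add, mul_sum, ← sum_sub_distrib, ← sum_add_distrib]
      exact sum_congr rfl fun k _ ↦ by ring
    _ = franel (m + 1) + franel m := by
      linear_combination -cast_franel_eq_sum_range_choose_succ (R := R) (le_refl (m + 1))
        + cast_franel_eq_sum_range_choose_succ (R := R) (N := m + 1) (le_succ m)
        - 2 * cast_franel_eq_sum_range (R := R) (lt_succ_self m)

end

def franelRecSummand (n k : ℕ) : ℚ :=
  ((n : ℚ) + 2) ^ 2 * ((n + 2).choose k : ℚ) ^ 3
    - (7 * (n : ℚ) ^ 2 + 21 * n + 16) * ((n + 1).choose k : ℚ) ^ 3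
    - 8 * ((n : ℚ) + 1) ^ 2 * (n.choose k : ℚ) ^ 3

-- Zeilberger's certificate for `franelRecSummand`, found by Gosper's algorithm.
def franelCertificate (n k : ℕ) : ℚ :=
  ((n + 2).choose k : ℚ) ^ 3 * (k : ℚ) ^ 3 *
    ((-72 - 200 * n - 202 * n ^ 2 - 88 * n ^ 3 - 14 * n ^ 4)
      + k * (78 + 171 * n + 120 * n ^ 2 + 27 * n ^ 3)
      + k ^ 2 * (-30 - 48 * n - 18 * n ^ 2) + k ^ 3 * (4 + 4 * n))

lemma mul_franelRecSummand_eq_sub {n k : ℕ} (hk : k ≤ n + 2) :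
    ((n : ℚ) + 1) ^ 2 * ((n : ℚ) + 2) ^ 3 * franelRecSummand n k
      = franelCertificate n (k + 1) - franelCertificate n k := by
  obtain hkn | rfl | rfl : k ≤ n ∨ k = n + 1 ∨ k = n + 2 := by omega
  · obtain ⟨d, rfl⟩ := exists_add_of_le hkn
    have h0 := cast_add_choose ℚ (a := k) (b := d)
    have h1 := cast_add_choose ℚ (a := k) (b := d + 1)
    have h2 := cast_add_choose ℚ (a := k) (b := d + 2)
    have h3 := cast_add_choose ℚ (a := k + 1) (b := d + 1)
    rw [← add_assoc] at h1 h2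
    rw [show k + 1 + (d + 1) = k + d + 2 by omega] at h3
    rw [franelRecSummand, franelCertificate, franelCertificate, h0, h1, h2, h3]
    simp only [factorial_succ]
    push_cast
    field_simp
    ring
  · simp [franelRecSummand, franelCertificate, choose_succ_self_right]
    ring
  · simp [franelRecSummand, franelCertificate, choose_eq_zero_of_lt (by omega : n < n + 2)]
    ring

theorem franel_recurrence (n : ℕ) :
    ((n : ℤ) + 2) ^ 2 * franel (n + 2)
      = (7 * (n : ℤ) ^ 2 + 21 * n + 16) * franel (n + 1) + 8 * ((n : ℤ) + 1) ^ 2 * franel n := by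
  have hsum : ∑ k ∈ range (n + 3), franelRecSummand n k = 0 := by
    have htel : ∑ k ∈ range (n + 3), (franelCertificate n (k + 1) - franelCertificate n k) = 0 := by
      rw [sum_range_sub, franelCertificate, franelCertificate,
        choose_eq_zero_of_lt (by omega : n + 2 < n + 3)]
      simp
    rw [← sum_congr rfl fun k hk ↦ mul_franelRecSummand_eq_sub (mem_range_succ_iff.1 hk),
      ← mul_sum] at htel
    exact (mul_eq_zero.1 htel).resolve_left (by positivity)
  simp only [franelRecSummand, sum_sub_distrib, ← mul_sum] at hsum
  rw [← cast_franel_eq_sum_range (by omega), ← cast_franel_eq_sum_range (by omega),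
    ← cast_franel_eq_sum_range (by omega)] at hsum
  exact_mod_cast (by linear_combination hsum : ((n : ℚ) + 2) ^ 2 * franel (n + 2)
      = (7 * (n : ℚ) ^ 2 + 21 * n + 16) * franel (n + 1) + 8 * ((n : ℚ) + 1) ^ 2 * franel n)

lemma three_mul_sum_franel_mul_eight_pow (m : ℕ) :
    3 * ∑ k ∈ range (m + 1), (3 * (k : ℤ) + 1) * franel k * 8 ^ (m - k)
      = ((m : ℤ) + 1) ^ 2 * (franel (m + 1) + franel m) := by
  induction m with
  | zero => rfl
  | succ m ih =>
    have hpow : ∀ k ∈ range (m + 1), (3 * (k : ℤ) + 1) * franel k * 8 ^ (m + 1 - k)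
        = 8 * ((3 * (k : ℤ) + 1) * franel k * 8 ^ (m - k)) := fun k hk ↦ by
      rw [Nat.sub_add_comm (mem_range_succ_iff.1 hk), pow_succ]
      ring
    rw [sum_range_succ, sum_congr rfl hpow, ← mul_sum, Nat.sub_self, pow_zero]
    push_cast
    linear_combination 8 * ih - franel_recurrence m

lemma choose_cube_mul_eq {K : Type*} [Field K] [CharZero K] (m k : ℕ) :
    (m.choose k : K) ^ 3 * (1 - ((m : K) + 1) / ((k : K) + 1) + ((m : K) + 1) ^ 2 / ((k : K) + 1) ^ 2)
      = (m.choose k : K) ^ 3 + (m.choose k : K) ^ 2 * m.choose (k + 1)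
        + m.choose k * (m.choose (k + 1) : K) ^ 2 := by
  have hpascal : ((m : K) + 1) / ((k : K) + 1) * m.choose k = m.choose k + m.choose (k + 1) := by
    rw [div_mul_eq_mul_div, div_eq_iff (cast_add_one_ne_zero k)]
    exact_mod_cast choose_succ_succ' m k ▸ add_one_mul_choose_eq m k
  rw [← div_pow]
  set t := ((m : K) + 1) / ((k : K) + 1)
  set a : K := (m.choose k : K)
  set c : K := (m.choose (k + 1) : K)
  linear_combination a * (t * a + c) * hpascal

theorem franel_identity (n : ℕ) (hn : 0 < n) :
    ∑ k ∈ Finset.range n, (3 * (k : ℚ) + 1) * (franel k : ℚ) * 8 ^ (n - 1 - k)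
      = (n : ℚ) ^ 2 * ∑ k ∈ Finset.range n, ((n - 1).choose k : ℚ) ^ 3 *
          (1 - (n : ℚ) / ((k : ℚ) + 1) + (n : ℚ) ^ 2 / ((k : ℚ) + 1) ^ 2) := by
  obtain ⟨m, rfl⟩ := exists_add_one_eq.2 hn
  have hlhs := congrArg (Int.cast : ℤ → ℚ) (three_mul_sum_franel_mul_eight_pow m)
  push_cast at hlhs
  simp only [add_tsub_cancel_right, cast_add, cast_one, choose_cube_mul_eq]
  linear_combination (hlhs - ((m : ℚ) + 1) ^ 2 * three_mul_sum_choose_cube_add (R := ℚ) m) / 3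
end

section
/- For every n ∈ ℕ the following polynomial identities hold: ∑_{k=0}^n (n choose k)·f_k(x) = g_n(x); f_n(x) = ∑_{k=0}^n (n choose k)·(−1)^{n−k}·g_k(x); and A_n(x) = ∑_{k=0}^n (n choose k)(n+k choose k)·f_k(x) = ∑_{k=0}^n (n choose k)(n+k choose k)·(−1)^{n−k}·g_k(x). Moreover, for every positive integer n, ∑_{k=0}^{n-1} (2k+1)·A_k(x) = (−1)^{n−1}·n·∑_{k=0}^{n-1} (n−1 choose k)(n+k choose k)·(−1)^k·g_k(x) and ∑_{k=0}^{n-1} (2k+1)·(−1)^k·A_k(x) = (−1)^{n−1}·n·∑_{k=0}^{n-1} (n−1 choose k)(n+k choose k)·f_k(x). -/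
/-!
Each identity compares the coefficients of two triangular expansions. The first and third are
checked coefficientwise in `x`; the others substitute one expansion into another (for instance
`g_k = ∑ⱼ C(k,j) f_j`), exchange the triangular double sum and compare coefficients of `f_j` or
`g_j`. Trinomial revision `C(n,k) C(k,j) = C(n,j) C(n-j,k-j)` reduces every coefficient identity
to a single sum over `i = k - j`. That sum is then a Vandermonde convolution (first identity), the
Riordan-type identity `∑ᵢ C(m,i) C(j,i) C(b+j+i, m+j) = C(b+j,m) C(b+j,j)` (third), an `m`-th
forward difference of `x ↦ C(x, m+j)` (second and fourth), or a telescoping sum (last two).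
-/

open Polynomial

/-- `g_n(x) = ∑_{k=0}^n (n choose k)² (2k choose k) xᵏ` as an integer polynomial. -/
noncomputable def gP (n : ℕ) : ℤ[X] :=
  ∑ k ∈ Finset.range (n + 1), C ((n.choose k : ℤ) ^ 2 * ((2 * k).choose k : ℤ)) * X ^ k

/-- The Franel polynomial `f_n(x) = ∑_{k=0}^n (n choose k)² (2k choose n) xᵏ`. -/
noncomputable def fP (n : ℕ) : ℤ[X] :=
  ∑ k ∈ Finset.range (n + 1), C ((n.choose k : ℤ) ^ 2 * ((2 * k).choose n : ℤ)) * X ^ k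

/-- The Apéry polynomial `A_n(x) = ∑_{k=0}^n (n choose k)² (n+k choose k)² xᵏ`. -/
noncomputable def AP (n : ℕ) : ℤ[X] :=
  ∑ k ∈ Finset.range (n + 1), C ((n.choose k : ℤ) ^ 2 * ((n + k).choose k : ℤ) ^ 2) * X ^ k

open Finset

theorem add_choose_eq_sum_range (a b c : ℕ) :
    (a + b).choose c = ∑ t ∈ range (c + 1), a.choose t * b.choose (c - t) := by
  rw [Nat.add_choose_eq, Nat.sum_antidiagonal_eq_sum_range_succ_mk]

theorem sum_range_choose_mul_choose_add (d m t : ℕ) :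
    ∑ s ∈ range (d + 1), d.choose s * m.choose (t + s) = (d + m).choose (d + t) := by
  have hvanish : ∀ u ≥ d + 1, d.choose u * m.choose (d + t - u) = 0 := fun u hu => by
    rw [Nat.choose_eq_zero_of_lt (by omega), zero_mul]
  rw [add_choose_eq_sum_range, eventually_constant_sum hvanish (by omega), ← sum_range_reflect]
  refine sum_congr rfl fun s hs => ?_
  have hs : s ≤ d := Nat.lt_succ_iff.mp (mem_range.mp hs)
  rw [add_tsub_cancel_right, Nat.choose_symm hs]
  congr 2
  omega

theorem choose_add_add_mul_choose (j n i : ℕ) :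
    (j + n).choose (j + i) * (j + i).choose j = (j + n).choose j * n.choose i := by
  simpa using Nat.choose_mul (n := j + n) (Nat.le_add_right j i)

theorem sum_range_choose_mul_choose_mul_eq_choose_mul_sum {R : Type*} [CommSemiring R]
    (j m : ℕ) (φ : ℕ → R) :
    ∑ k ∈ range (j + m + 1), ((j + m).choose k * k.choose j : R) * φ k
      = (j + m).choose j * ∑ i ∈ range (m + 1), (m.choose i : R) * φ (j + i) := by
  rw [add_assoc, sum_range_add, sum_eq_zero fun k hk => ?_, zero_add, mul_sum]
  · refine sum_congr rfl fun i _ => ?_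
    rw [← mul_assoc, ← Nat.cast_mul, ← Nat.cast_mul, choose_add_add_mul_choose]
  · simp [Nat.choose_eq_zero_of_lt (mem_range.mp hk)]

theorem sum_range_choose_mul_choose_mul_range_symm {R : Type*} [CommSemiring R]
    (m j : ℕ) (ψ : ℕ → R) :
    ∑ i ∈ range (m + 1), (m.choose i * j.choose i : R) * ψ i
      = ∑ i ∈ range (j + 1), (m.choose i * j.choose i : R) * ψ i := by
  have hm : ∀ i ≥ m + 1, (m.choose i * j.choose i : R) * ψ i = 0 := fun i hi => by
    simp [Nat.choose_eq_zero_of_lt (by omega : m < i)]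
  have hj : ∀ i ≥ j + 1, (m.choose i * j.choose i : R) * ψ i = 0 := fun i hi => by
    simp [Nat.choose_eq_zero_of_lt (by omega : j < i)]
  rw [← eventually_constant_sum hm (by omega : m + 1 ≤ m + j + 1),
    eventually_constant_sum hj (by omega)]

theorem sum_range_choose_mul_choose_mul_choose (m j t : ℕ) :
    ∑ i ∈ range (m + 1), m.choose i * j.choose i * i.choose t
      = j.choose t * (m + j - t).choose j := by
  obtain hjt | htj := lt_or_ge j t
  · simp only [Nat.choose_eq_zero_of_lt hjt, zero_mul]
    refine sum_eq_zero fun i _ => ?_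
    obtain hij | hji := le_or_gt i j
    · rw [Nat.choose_eq_zero_of_lt (by omega : i < t), mul_zero]
    · rw [Nat.choose_eq_zero_of_lt hji, mul_zero, zero_mul]
  obtain ⟨d, rfl⟩ := Nat.exists_eq_add_of_le htj
  have hrange := sum_range_choose_mul_choose_mul_range_symm m (t + d) (·.choose t)
  have hrev := sum_range_choose_mul_choose_mul_eq_choose_mul_sum t d (m.choose ·)
  simp only [Nat.cast_id] at hrange hrev
  calc ∑ i ∈ range (m + 1), m.choose i * (t + d).choose i * i.choose t
      = ∑ i ∈ range (t + d + 1), (t + d).choose i * i.choose t * m.choose i := by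
        rw [hrange]; exact sum_congr rfl fun i _ => by ring
    _ = (t + d).choose t * (m + (t + d) - t).choose (t + d) := by
        rw [hrev, sum_range_choose_mul_choose_add, Nat.add_comm d m, Nat.add_comm d t]
        congr 2
        omega

theorem sum_range_choose_mul_choose_mul_add_choose (m j b : ℕ) :
    ∑ i ∈ range (m + 1), m.choose i * j.choose i * (b + j + i).choose (m + j)
      = (b + j).choose m * (b + j).choose j := by
  have hvanish : ∀ t ≥ m + 1,
      (b + j).choose (m + j - t) * (j.choose t * (m + j - t).choose j) = 0 := fun t ht => by
    obtain hjt | htj := lt_or_ge j t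
    · rw [Nat.choose_eq_zero_of_lt hjt, zero_mul, mul_zero]
    · rw [Nat.choose_eq_zero_of_lt (by omega : m + j - t < j), mul_zero, mul_zero]
  calc ∑ i ∈ range (m + 1), m.choose i * j.choose i * (b + j + i).choose (m + j)
      = ∑ t ∈ range (m + j + 1), (b + j).choose (m + j - t)
          * ∑ i ∈ range (m + 1), m.choose i * j.choose i * i.choose t := by
        simp_rw [Nat.add_comm (b + j), add_choose_eq_sum_range _ (b + j), mul_sum]
        rw [sum_comm]
        exact sum_congr rfl fun t _ => sum_congr rfl fun i _ => by ring
    _ = ∑ t ∈ range (m + 1),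
          (b + j).choose (m + j - t) * (j.choose t * (m + j - t).choose j) := by
        simp_rw [sum_range_choose_mul_choose_mul_choose]
        exact eventually_constant_sum hvanish (by omega)
    _ = ∑ t ∈ range (m + 1), (b + j).choose j * (j.choose t * b.choose (m - t)) := by
        refine sum_congr rfl fun t ht => ?_
        have ht : t ≤ m := Nat.lt_succ_iff.mp (mem_range.mp ht)
        have h := Nat.choose_mul (n := b + j) (by omega : j ≤ m + j - t)
        rw [Nat.add_sub_cancel, show m + j - t - j = m - t by omega] at h
        rw [mul_left_comm, h, mul_left_comm]
    _ = (b + j).choose m * (b + j).choose j := by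
        rw [← mul_sum, ← add_choose_eq_sum_range, Nat.add_comm j b, mul_comm]

theorem sum_range_choose_mul_choose_sq_mul_choose {n j : ℕ} (hjn : j ≤ n) :
    ∑ k ∈ range (n + 1), n.choose k * (k.choose j ^ 2 * (2 * j).choose k)
      = n.choose j ^ 2 * (2 * j).choose j := by
  obtain ⟨m, rfl⟩ := Nat.exists_eq_add_of_le hjn
  have hrev := sum_range_choose_mul_choose_mul_eq_choose_mul_sum j m
    fun k => (j + j).choose k * k.choose j
  have hvand := sum_range_choose_mul_choose_add m j 0
  simp only [Nat.cast_id, choose_add_add_mul_choose] at hrev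
  simp only [zero_add, add_zero] at hvand
  rw [Nat.add_comm m j, ← Nat.choose_symm_add] at hvand
  calc ∑ k ∈ range (j + m + 1), (j + m).choose k * (k.choose j ^ 2 * (2 * j).choose k)
      = ∑ k ∈ range (j + m + 1),
          (j + m).choose k * k.choose j * ((j + j).choose k * k.choose j) :=
        sum_congr rfl fun k _ => by rw [two_mul]; ring
    _ = (j + m).choose j * ∑ i ∈ range (m + 1),
          (j + j).choose j * (m.choose i * j.choose i) := by
        rw [hrev]
        exact congrArg _ (sum_congr rfl fun i _ => by ring)
    _ = (j + m).choose j ^ 2 * (2 * j).choose j := by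
        rw [← mul_sum, hvand, two_mul]
        ring

theorem sum_range_choose_mul_add_choose_mul_choose_sq_mul_choose {n j : ℕ} (hjn : j ≤ n) :
    ∑ k ∈ range (n + 1), n.choose k * (n + k).choose k * (k.choose j ^ 2 * (2 * j).choose k)
      = n.choose j ^ 2 * (n + j).choose j ^ 2 := by
  obtain ⟨m, rfl⟩ := Nat.exists_eq_add_of_le hjn
  have hrev := sum_range_choose_mul_choose_mul_eq_choose_mul_sum j m
    fun k => (j + m + k).choose k * ((j + j).choose k * k.choose j)
  simp only [Nat.cast_id, choose_add_add_mul_choose] at hrev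
  have hsymm : ∀ i, (j + m + (j + i)).choose (j + i) = (j + m + j + i).choose (m + j) :=
    fun i => by
      rw [← Nat.add_assoc]
      exact Nat.choose_symm_of_eq_add (by omega)
  have hmid :
      (j + j).choose j * (j + m + j).choose m = (j + m).choose j * (j + m + j).choose j := by
    have h := Nat.choose_mul (n := j + m + j) (k := j + j) (s := j) (by omega)
    rw [show j + m + j - j = j + m by omega, Nat.add_sub_cancel] at h
    rw [Nat.choose_symm_of_eq_add (show j + m + j = m + (j + j) by omega), mul_comm, h, mul_comm]
  calc ∑ k ∈ range (j + m + 1),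
        (j + m).choose k * (j + m + k).choose k * (k.choose j ^ 2 * (2 * j).choose k)
      = ∑ k ∈ range (j + m + 1), (j + m).choose k * k.choose j
          * ((j + m + k).choose k * ((j + j).choose k * k.choose j)) :=
        sum_congr rfl fun k _ => by rw [two_mul]; ring
    _ = (j + m).choose j * ∑ i ∈ range (m + 1),
          (j + j).choose j * (m.choose i * j.choose i * (j + m + j + i).choose (m + j)) := by
        rw [hrev]
        exact congrArg _ (sum_congr rfl fun i _ => by rw [hsymm]; ring)
    _ = (j + m).choose j ^ 2 * (j + m + j).choose j ^ 2 := by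
        rw [← mul_sum, sum_range_choose_mul_choose_mul_add_choose,
          ← mul_assoc ((j + j).choose j), hmid]
        ring

theorem sum_range_neg_one_pow_mul_choose_mul_add_choose (m j y : ℕ) :
    ∑ i ∈ range (m + 1), (-1 : ℤ) ^ (m - i) * m.choose i * (y + i).choose (m + j)
      = y.choose j := by
  have h := fwdDiff_iter_eq_sum_shift 1 (fun x : ℕ => ((x.choose (m + j) : ℕ) : ℤ)) m y
  rw [fwdDiff_iter_choose] at h
  simpa using h.symm

theorem sum_range_choose_mul_neg_one_pow_mul_choose (n j : ℕ) :
    ∑ k ∈ range (n + 1), n.choose k * (-1 : ℤ) ^ (n - k) * k.choose j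
      = if n = j then 1 else 0 := by
  have h := fwdDiff_iter_eq_sum_shift 1 (fun x : ℕ => ((x.choose j : ℕ) : ℤ)) n 0
  rw [fwdDiff_iter_choose_zero] at h
  simpa [mul_comm] using h.symm

theorem sum_range_choose_mul_add_choose_mul_neg_one_pow_mul_choose {n j : ℕ} (hjn : j ≤ n) :
    ∑ k ∈ range (n + 1), (n.choose k * (n + k).choose k * (-1 : ℤ) ^ (n - k)) * k.choose j
      = n.choose j * (n + j).choose j := by
  obtain ⟨m, rfl⟩ := Nat.exists_eq_add_of_le hjn
  have hrev := sum_range_choose_mul_choose_mul_eq_choose_mul_sum j m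
    fun k => ((j + m + k).choose k : ℤ) * (-1) ^ (j + m - k)
  have hsymm : ∀ i, (j + m + (j + i)).choose (j + i) = (j + m + j + i).choose (m + j) :=
    fun i => by
      rw [← Nat.add_assoc]
      exact Nat.choose_symm_of_eq_add (by omega)
  calc ∑ k ∈ range (j + m + 1),
        ((j + m).choose k * (j + m + k).choose k * (-1 : ℤ) ^ (j + m - k)) * k.choose j
      = ∑ k ∈ range (j + m + 1),
          ((j + m).choose k * k.choose j : ℤ) * ((j + m + k).choose k * (-1) ^ (j + m - k)) :=
        sum_congr rfl fun k _ => by ring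
    _ = (j + m).choose j * ∑ i ∈ range (m + 1),
          (-1 : ℤ) ^ (m - i) * m.choose i * (j + m + j + i).choose (m + j) := by
        rw [hrev]
        refine congrArg _ (sum_congr rfl fun i _ => ?_)
        rw [hsymm, Nat.add_sub_add_left]
        ring
    _ = (j + m).choose j * (j + m + j).choose j := by
        rw [sum_range_neg_one_pow_mul_choose_mul_add_choose]

theorem sum_range_two_mul_add_one_mul_neg_one_pow_mul_choose_mul_add_choose (N j : ℕ) :
    ∑ k ∈ range (N + 1), (2 * (k : ℤ) + 1) * (-1) ^ k * (k.choose j * (k + j).choose j)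
      = (-1) ^ N * ((N + 1 : ℕ) : ℤ) * (N.choose j * (N + 1 + j).choose j) := by
  induction N with
  | zero => cases j <;> simp
  | succ N ih =>
    rw [sum_range_succ, ih]
    have hchoose_succ :
        ((N + 1 : ℕ) : ℤ) * N.choose j = ((N + 1 : ℕ) : ℤ) * (N + 1).choose j
          - j * (N + 1).choose j := by
      obtain hlt | hle := lt_or_ge (N + 1) j
      · simp [Nat.choose_eq_zero_of_lt hlt, Nat.choose_eq_zero_of_lt (by omega : N < j)]
      · have h := Nat.choose_mul_succ_eq N j
        rw [← Nat.cast_inj (R := ℤ), Nat.cast_mul, Nat.cast_mul, Nat.cast_sub hle] at h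
        linear_combination h
    have hchoose_add : ((N + 2 + j : ℕ) : ℤ) * (N + 1 + j).choose j
        = (N + 2 + j).choose j * ((N + 2 : ℕ) : ℤ) := by
      have h := Nat.add_one_mul_choose_eq (N + 1 + j) (N + 1)
      rw [Nat.choose_symm_add, show N + 1 + j + 1 = N + 2 + j by omega, Nat.choose_symm_add] at h
      exact_mod_cast h
    push_cast at hchoose_succ hchoose_add ⊢
    linear_combination (-1 : ℤ) ^ N * ((N + 1 + j).choose j : ℤ) * hchoose_succ
      - (-1 : ℤ) ^ N * ((N + 1).choose j : ℤ) * hchoose_add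

-- The factor `k.choose j` absorbs the case `k < j`, where `k - j` truncates to `0`.
theorem neg_one_pow_sub_mul_choose (k j : ℕ) :
    (-1 : ℤ) ^ (k - j) * k.choose j = (-1) ^ (k + j) * k.choose j := by
  obtain h | h := lt_or_ge k j
  · simp [Nat.choose_eq_zero_of_lt h]
  · rw [show k + j = k - j + 2 * j by omega, pow_add, pow_mul]
    simp

theorem sum_C_mul_sum_C_mul_comm {R : Type*} [CommSemiring R] (N : ℕ) (a : ℕ → R)
    (b : ℕ → ℕ → R) (P : ℕ → R[X]) (hb : ∀ k j, k < j → b k j = 0) :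
    ∑ k ∈ range N, C (a k) * ∑ j ∈ range (k + 1), C (b k j) * P j
      = ∑ j ∈ range N, C (∑ k ∈ range N, a k * b k j) * P j := by
  have hext : ∀ k ∈ range N,
      ∑ j ∈ range (k + 1), C (b k j) * P j = ∑ j ∈ range N, C (b k j) * P j := fun k hk =>
    sum_subset (range_subset_range.2 (mem_range.1 hk)) fun j _ hj => by
      simp [hb k j (by simpa using hj)]
  simp_rw [map_sum, sum_mul, C_mul, mul_assoc]
  rw [sum_congr rfl fun k hk => by rw [hext k hk, mul_sum]]
  exact sum_comm

theorem sum_choose_mul_fP_eq_gP (n : ℕ) :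
    ∑ k ∈ range (n + 1), C (n.choose k : ℤ) * fP k = gP n := by
  simp only [fP, gP]
  rw [sum_C_mul_sum_C_mul_comm _ _ (fun k j => (k.choose j : ℤ) ^ 2 * ((2 * j).choose k : ℤ))
    (X ^ ·) fun k j h => by simp [Nat.choose_eq_zero_of_lt h]]
  refine sum_congr rfl fun j hj => ?_
  exact_mod_cast congrArg (fun c : ℕ => C (c : ℤ) * X ^ j)
    (sum_range_choose_mul_choose_sq_mul_choose (Nat.lt_succ_iff.mp (mem_range.mp hj)))

theorem fP_eq_sum_neg_one_pow_mul_gP (n : ℕ) :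
    fP n = ∑ k ∈ range (n + 1), C ((n.choose k : ℤ) * (-1 : ℤ) ^ (n - k)) * gP k := by
  simp_rw [← sum_choose_mul_fP_eq_gP]
  rw [sum_C_mul_sum_C_mul_comm _ _ (fun k j => (k.choose j : ℤ)) fP
    fun k j h => by simp [Nat.choose_eq_zero_of_lt h]]
  simp_rw [sum_range_choose_mul_neg_one_pow_mul_choose]
  simp

theorem AP_eq_sum_choose_mul_fP (n : ℕ) :
    AP n = ∑ k ∈ range (n + 1), C ((n.choose k : ℤ) * ((n + k).choose k : ℤ)) * fP k := by
  simp only [fP, AP]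
  rw [sum_C_mul_sum_C_mul_comm _ _ (fun k j => (k.choose j : ℤ) ^ 2 * ((2 * j).choose k : ℤ))
    (X ^ ·) fun k j h => by simp [Nat.choose_eq_zero_of_lt h]]
  refine sum_congr rfl fun j hj => ?_
  have h := sum_range_choose_mul_add_choose_mul_choose_sq_mul_choose
    (Nat.lt_succ_iff.mp (mem_range.mp hj))
  exact_mod_cast congrArg (fun c : ℕ => C (c : ℤ) * X ^ j) h.symm

theorem AP_eq_sum_neg_one_pow_mul_gP (n : ℕ) :
    AP n = ∑ k ∈ range (n + 1),
      C ((n.choose k : ℤ) * ((n + k).choose k : ℤ) * (-1 : ℤ) ^ (n - k)) * gP k := by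
  simp_rw [← sum_choose_mul_fP_eq_gP]
  rw [sum_C_mul_sum_C_mul_comm _ _ (fun k j => (k.choose j : ℤ)) fP
    (fun k j h => by simp [Nat.choose_eq_zero_of_lt h]), AP_eq_sum_choose_mul_fP]
  refine sum_congr rfl fun j hj => ?_
  rw [sum_range_choose_mul_add_choose_mul_neg_one_pow_mul_choose
    (Nat.lt_succ_iff.mp (mem_range.mp hj))]

theorem sum_mul_AP_eq_sum_gP (n : ℕ) (hn : 0 < n) :
    ∑ k ∈ range n, C (2 * (k : ℤ) + 1) * AP k
      = C ((-1 : ℤ) ^ (n - 1) * (n : ℤ)) * ∑ k ∈ range n,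
          C (((n - 1).choose k : ℤ) * ((n + k).choose k : ℤ) * (-1 : ℤ) ^ k) * gP k := by
  obtain ⟨N, rfl⟩ := Nat.exists_eq_add_one_of_ne_zero hn.ne'
  simp_rw [AP_eq_sum_neg_one_pow_mul_gP]
  rw [sum_C_mul_sum_C_mul_comm _ _
    (fun k j => (k.choose j : ℤ) * ((k + j).choose j : ℤ) * (-1 : ℤ) ^ (k - j)) gP
    (fun k j h => by simp [Nat.choose_eq_zero_of_lt h]), mul_sum]
  refine sum_congr rfl fun j _ => ?_
  rw [← mul_assoc, ← C_mul]
  congr 2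
  calc ∑ k ∈ range (N + 1),
        (2 * (k : ℤ) + 1) * ((k.choose j : ℤ) * ((k + j).choose j : ℤ) * (-1 : ℤ) ^ (k - j))
      = (-1) ^ j * ∑ k ∈ range (N + 1),
          (2 * (k : ℤ) + 1) * (-1) ^ k * (k.choose j * (k + j).choose j) := by
        rw [mul_sum]
        refine sum_congr rfl fun k _ => ?_
        linear_combination (2 * (k : ℤ) + 1) * ((k + j).choose j : ℤ)
          * neg_one_pow_sub_mul_choose k j
    _ = _ := by
        rw [sum_range_two_mul_add_one_mul_neg_one_pow_mul_choose_mul_add_choose,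
          Nat.add_sub_cancel]
        ring

theorem sum_neg_one_pow_mul_AP_eq_sum_fP (n : ℕ) (hn : 0 < n) :
    ∑ k ∈ range n, C ((2 * (k : ℤ) + 1) * (-1 : ℤ) ^ k) * AP k
      = C ((-1 : ℤ) ^ (n - 1) * (n : ℤ)) * ∑ k ∈ range n,
          C (((n - 1).choose k : ℤ) * ((n + k).choose k : ℤ)) * fP k := by
  obtain ⟨N, rfl⟩ := Nat.exists_eq_add_one_of_ne_zero hn.ne'
  simp_rw [AP_eq_sum_choose_mul_fP]
  rw [sum_C_mul_sum_C_mul_comm _ _ (fun k j => (k.choose j : ℤ) * ((k + j).choose j : ℤ)) fP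
    (fun k j h => by simp [Nat.choose_eq_zero_of_lt h]), mul_sum]
  refine sum_congr rfl fun j _ => ?_
  rw [← mul_assoc, ← C_mul, sum_range_two_mul_add_one_mul_neg_one_pow_mul_choose_mul_add_choose,
    Nat.add_sub_cancel]

theorem apery_franel_g_identities :
    (∀ n : ℕ, ∑ k ∈ Finset.range (n + 1), C (n.choose k : ℤ) * fP k = gP n)
    ∧ (∀ n : ℕ, fP n = ∑ k ∈ Finset.range (n + 1),
        C ((n.choose k : ℤ) * (-1 : ℤ) ^ (n - k)) * gP k)
    ∧ (∀ n : ℕ, AP n = ∑ k ∈ Finset.range (n + 1),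
        C ((n.choose k : ℤ) * ((n + k).choose k : ℤ)) * fP k)
    ∧ (∀ n : ℕ, AP n = ∑ k ∈ Finset.range (n + 1),
        C ((n.choose k : ℤ) * ((n + k).choose k : ℤ) * (-1 : ℤ) ^ (n - k)) * gP k)
    ∧ (∀ n : ℕ, 0 < n → ∑ k ∈ Finset.range n, C (2 * (k : ℤ) + 1) * AP k
        = C ((-1 : ℤ) ^ (n - 1) * (n : ℤ)) * ∑ k ∈ Finset.range n,
            C (((n - 1).choose k : ℤ) * ((n + k).choose k : ℤ) * (-1 : ℤ) ^ k) * gP k)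
    ∧ (∀ n : ℕ, 0 < n → ∑ k ∈ Finset.range n, C ((2 * (k : ℤ) + 1) * (-1 : ℤ) ^ k) * AP k
        = C ((-1 : ℤ) ^ (n - 1) * (n : ℤ)) * ∑ k ∈ Finset.range n,
            C (((n - 1).choose k : ℤ) * ((n + k).choose k : ℤ)) * fP k) :=
  ⟨sum_choose_mul_fP_eq_gP, fP_eq_sum_neg_one_pow_mul_gP, AP_eq_sum_choose_mul_fP,
    AP_eq_sum_neg_one_pow_mul_gP, sum_mul_AP_eq_sum_gP, sum_neg_one_pow_mul_AP_eq_sum_fP⟩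
end

section
/- In the field ℚ(q) of rational functions, for every n ∈ ℕ and every x ∈ ℚ(q): A_n(x;q) = ∑_{k=0}^n (−1)^{n−k}·q^{(n−k)(5n+3k+1)/2}·[n choose k]_q·[n+k choose k]_q·g_k(x;q). -/
/-!
After expanding each `g_k` and exchanging the sums, the coefficient of `xʲ` on the right is an
alternating sum over `k = j + i`, `0 ≤ i ≤ m = n - j`. Up to a factor independent of `i`, its
terms are those of the terminating q-Chu–Vandermonde sum
  `∑ᵢ (-1)^(m-i) q^(i choose 2) [m choose i]_q (b;q)ᵢ (cqⁱ;q)_(m-i) cⁱ b^(m-i)`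
  `  = ∏_{t<m} (cqᵗ - b)`
at `b = q^(m+2j+1)`, `c = q`, whose product side is an explicit power of `q` times a ratio of
q-factorials. The q-Chu–Vandermonde identity follows by induction on `m` from a telescoping
recurrence in `i`.
-/

/-- The q-integer `[m]_q = (1 - q^m)/(1 - q)` in `ℚ(q)`. -/
noncomputable def qint (m : ℕ) : RatFunc ℚ := (1 - RatFunc.X ^ m) / (1 - RatFunc.X)

/-- The Gaussian binomial coefficient `[n choose k]_q = ∏_{j=1}^k [n-j+1]_q/[j]_q`. -/
noncomputable def qbinom (n k : ℕ) : RatFunc ℚ :=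
  ∏ j ∈ Finset.range k, qint (n - j) / qint (j + 1)

/-- `A_n(x; q) = ∑_{k=0}^n q^{2n(n-k)} [n choose k]_q² [n+k choose k]_q² xᵏ`. -/
noncomputable def Aq (x : RatFunc ℚ) (n : ℕ) : RatFunc ℚ :=
  ∑ k ∈ Finset.range (n + 1),
    RatFunc.X ^ (2 * n * (n - k)) * qbinom n k ^ 2 * qbinom (n + k) k ^ 2 * x ^ k

/-- `g_n(x; q) = ∑_{k=0}^n q^{2n(n-k)} [n choose k]_q² [2k choose k]_q xᵏ`. -/
noncomputable def gq (x : RatFunc ℚ) (n : ℕ) : RatFunc ℚ :=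
  ∑ k ∈ Finset.range (n + 1),
    RatFunc.X ^ (2 * n * (n - k)) * qbinom n k ^ 2 * qbinom (2 * k) k * x ^ k

open Finset

theorem Nat.choose_two_add (a b : ℕ) : (a + b).choose 2 = a.choose 2 + b.choose 2 + a * b := by
  apply Nat.cast_injective (R := ℚ)
  push_cast [Nat.cast_choose_two]
  ring

theorem mul_five_three_div_two (a k : ℕ) :
    a * (5 * (k + a) + 3 * k + 1) / 2 = 5 * a.choose 2 + 3 * a + 4 * a * k := by
  refine Nat.div_eq_of_eq_mul_left two_pos ?_
  apply Nat.cast_injective (R := ℚ)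
  push_cast [Nat.cast_choose_two]
  ring

section

local notation "q" => (RatFunc.X : RatFunc ℚ)

noncomputable def qfac (n : ℕ) : RatFunc ℚ := ∏ j ∈ range n, (1 - q ^ (j + 1))

noncomputable def qpoch (b : RatFunc ℚ) (n : ℕ) : RatFunc ℚ :=
  ∏ t ∈ range n, (1 - b * q ^ t)

theorem one_sub_X_pow_ne_zero {m : ℕ} (hm : m ≠ 0) : (1 - q ^ m : RatFunc ℚ) ≠ 0 := by
  have h := RatFunc.algebraMap_ne_zero
    (Polynomial.X_pow_sub_C_ne_zero (Nat.pos_of_ne_zero hm) (1 : ℚ))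
  rw [← neg_sub, neg_ne_zero]
  simpa [RatFunc.algebraMap_X] using h

theorem qfac_ne_zero (n : ℕ) : qfac n ≠ 0 :=
  prod_ne_zero_iff.mpr fun j _ => one_sub_X_pow_ne_zero j.succ_ne_zero

@[simp]
theorem qfac_zero : qfac 0 = 1 := prod_range_zero _

theorem qfac_succ (n : ℕ) : qfac (n + 1) = qfac n * (1 - q ^ (n + 1)) := prod_range_succ _ n

theorem qpoch_succ (b : RatFunc ℚ) (n : ℕ) : qpoch b (n + 1) = qpoch b n * (1 - b * q ^ n) :=
  prod_range_succ _ n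

theorem qpoch_succ' (b : RatFunc ℚ) (n : ℕ) : qpoch b (n + 1) = (1 - b) * qpoch (b * q) n := by
  rw [qpoch, prod_range_succ', mul_comm, qpoch]
  simp [pow_succ, mul_assoc, mul_comm q]

theorem qfac_add (a k : ℕ) : qfac (a + k) = qfac a * qpoch (q ^ (a + 1)) k := by
  induction k with
  | zero => simp [qpoch]
  | succ k ih =>
    rw [← add_assoc, qfac_succ, ih, qpoch_succ, ← pow_add, add_right_comm, mul_assoc]

theorem qpoch_X_pow_eq_div (a k : ℕ) : qpoch (q ^ (a + 1)) k = qfac (a + k) / qfac a := by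
  rw [qfac_add, mul_div_cancel_left₀ _ (qfac_ne_zero a)]

theorem qbinom_eq_zero_of_lt {n k : ℕ} (h : n < k) : qbinom n k = 0 :=
  prod_eq_zero (mem_range.mpr h) (by simp [qint])

theorem qbinom_eq_div {n k : ℕ} (h : k ≤ n) :
    qbinom n k = qfac n / (qfac k * qfac (n - k)) := by
  induction k with
  | zero => simp [qbinom, div_self (qfac_ne_zero n)]
  | succ k ih =>
    obtain ⟨l, hl, hl'⟩ : ∃ l, n - k = l + 1 ∧ n - (k + 1) = l :=
      ⟨n - (k + 1), by omega, rfl⟩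
    rw [qbinom, prod_range_succ, ← qbinom, ih (by omega), hl, hl', qint, qint, qfac_succ,
      qfac_succ]
    have hq : 1 - q ≠ 0 := by simpa using one_sub_X_pow_ne_zero one_ne_zero
    field_simp [hq, qfac_ne_zero, one_sub_X_pow_ne_zero]

theorem prod_X_pow_sub_mul_qfac (m N : ℕ) :
    (∏ t ∈ range m, (q * q ^ t - q ^ (m + N + 1))) * qfac N =
      q ^ (m + 1).choose 2 * qfac (m + N) := by
  induction m with
  | zero => simp
  | succ m ih =>
    have hshift : ∀ t,
        q * q ^ (t + 1) - q ^ (m + 1 + N + 1) = q * (q * q ^ t - q ^ (m + N + 1)) :=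
      fun t => by ring
    rw [prod_range_succ', prod_congr rfl fun t _ => hshift t, prod_mul_distrib, prod_const,
      card_range, Nat.choose_succ_succ' (m + 1), Nat.choose_one_right, Nat.add_right_comm m 1 N,
      qfac_succ]
    linear_combination (q ^ m * (q - q ^ (m + N + 2))) * ih

noncomputable def chuTerm (m i : ℕ) (b c : RatFunc ℚ) : RatFunc ℚ :=
  (-1) ^ (m - i) * q ^ i.choose 2 * qbinom m i * qpoch b i * qpoch (c * q ^ i) (m - i) *
    c ^ i * b ^ (m - i)

theorem chuTerm_eq_zero_of_lt {m i : ℕ} (h : m < i) (b c : RatFunc ℚ) :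
    chuTerm m i b c = 0 := by
  simp [chuTerm, qbinom_eq_zero_of_lt h]

/-- A creative-telescoping certificate: summed over `i`, the right-hand side telescopes to zero. -/
theorem chuTerm_telescope {m i : ℕ} (hi : i ≤ m + 1) (b c : RatFunc ℚ) :
    (1 - q ^ (m + 1)) * (chuTerm (m + 1) i b c - (c - b) * chuTerm m i b (q * c)) =
      (q ^ (i + 1) - 1) * chuTerm (m + 1) (i + 1) b c - (q ^ i - 1) * chuTerm (m + 1) i b c := by
  obtain rfl | hi := eq_or_lt_of_le hi
  · simp [chuTerm_eq_zero_of_lt (Nat.lt_succ_self m),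
      chuTerm_eq_zero_of_lt (Nat.lt_succ_self (m + 1))]
    ring
  obtain ⟨a, rfl⟩ : ∃ a, m = i + a := ⟨m - i, by omega⟩
  simp only [chuTerm, qbinom_eq_div (by omega : i ≤ i + a + 1),
    qbinom_eq_div (by omega : i ≤ i + a),
    qbinom_eq_div (by omega : i + 1 ≤ i + a + 1), Nat.choose_succ_succ', Nat.choose_one_right,
    show i + a + 1 - i = a + 1 by omega, show i + a - i = a by omega,
    show i + a + 1 - (i + 1) = a by omega, qfac_succ]
  rw [qpoch_succ' (c * q ^ i) a, qpoch_succ b i, show q * c * q ^ i = c * q ^ i * q by ring,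
    show c * q ^ (i + 1) = c * q ^ i * q by ring]
  field_simp [qfac_ne_zero, one_sub_X_pow_ne_zero]
  ring

theorem sum_chuTerm (m : ℕ) (b c : RatFunc ℚ) :
    ∑ i ∈ range (m + 1), chuTerm m i b c = ∏ t ∈ range m, (c * q ^ t - b) := by
  induction m generalizing c with
  | zero => simp [chuTerm, qbinom, qpoch]
  | succ m ih =>
    have htel : (1 - q ^ (m + 1)) * (∑ i ∈ range (m + 2), chuTerm (m + 1) i b c -
        (c - b) * ∑ i ∈ range (m + 2), chuTerm m i b (q * c)) = 0 := by
      rw [mul_sum, ← sum_sub_distrib, mul_sum,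
        sum_congr rfl fun i hi => chuTerm_telescope (Nat.lt_succ_iff.mp (mem_range.mp hi)) b c,
        sum_range_sub (fun i => (q ^ i - 1) * chuTerm (m + 1) i b c),
        chuTerm_eq_zero_of_lt (by omega)]
      simp
    replace htel := sub_eq_zero.mp ((mul_eq_zero.mp htel).resolve_left
      (one_sub_X_pow_ne_zero m.succ_ne_zero))
    rw [sum_range_succ (fun i => chuTerm m i b (q * c)) (m + 1),
      chuTerm_eq_zero_of_lt (Nat.lt_succ_self m), add_zero, ih] at htel
    rw [htel, prod_range_succ']
    simp [pow_succ, mul_comm, mul_assoc]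

theorem apery_summand_eq_mul_chuTerm {i m : ℕ} (hi : i ≤ m) (j : ℕ) :
    (-1) ^ (j + m - (j + i)) * q ^ ((j + m - (j + i)) * (5 * (j + m) + 3 * (j + i) + 1) / 2) *
        qbinom (j + m) (j + i) * qbinom (j + m + (j + i)) (j + i) *
        (q ^ (2 * (j + i) * (j + i - j)) * qbinom (j + i) j ^ 2 * qbinom (2 * j) j) =
      q ^ (3 * m.choose 2 + m + 2 * m * j) * qfac (2 * j) * qfac (m + 2 * j) /
        (qfac j ^ 4 * qfac m ^ 2) * chuTerm m i (q ^ (m + 2 * j + 1)) q := by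
  obtain ⟨a, rfl⟩ : ∃ a, m = i + a := ⟨m - i, by omega⟩
  have hexp : a * (5 * (j + (i + a)) + 3 * (j + i) + 1) / 2 =
      5 * a.choose 2 + 3 * a + 4 * a * (j + i) := by
    rw [← mul_five_three_div_two, ← add_assoc]
  -- Squares are rewritten through `choose 2`, so that `ring` sees exponents linear in the
  -- atoms `i.choose 2`, `a.choose 2`.
  have hsq : 2 * (j + i) * i = 2 * j * i + 4 * i.choose 2 + 2 * i := by
    apply Nat.cast_injective (R := ℚ)
    push_cast [Nat.cast_choose_two]
    ring
  have hsq' : (i + a + 2 * j + 1) * a = i * a + 2 * a.choose 2 + 2 * a + 2 * j * a := by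
    apply Nat.cast_injective (R := ℚ)
    push_cast [Nat.cast_choose_two]
    ring
  simp only [chuTerm, show j + (i + a) - (j + i) = a by omega, show j + i - j = i by omega,
    show i + a - i = a by omega, show 2 * j - j = j by omega, Nat.add_sub_cancel, hexp,
    Nat.choose_two_add, qbinom_eq_div (by omega : j + i ≤ j + (i + a)),
    qbinom_eq_div (by omega : j + i ≤ j + (i + a) + (j + i)),
    qbinom_eq_div (by omega : j ≤ j + i),
    qbinom_eq_div (by omega : j ≤ 2 * j), qbinom_eq_div (by omega : i ≤ i + a)]
  rw [show q * q ^ i = q ^ (i + 1) by ring, qpoch_X_pow_eq_div, qpoch_X_pow_eq_div, ← pow_mul,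
    hsq, hsq', show j + (i + a) + (j + i) = i + a + 2 * j + i by ring]
  field_simp [qfac_ne_zero]
  ring

theorem sum_apery_summand (j m : ℕ) :
    ∑ k ∈ range (j + m + 1),
      (-1) ^ (j + m - k) * q ^ ((j + m - k) * (5 * (j + m) + 3 * k + 1) / 2) *
        qbinom (j + m) k * qbinom (j + m + k) k *
        (q ^ (2 * k * (k - j)) * qbinom k j ^ 2 * qbinom (2 * j) j) =
      q ^ (2 * (j + m) * m) * qbinom (j + m) j ^ 2 * qbinom (j + m + j) j ^ 2 := by
  have hlow : ∀ k ∈ range j,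
      (-1) ^ (j + m - k) * q ^ ((j + m - k) * (5 * (j + m) + 3 * k + 1) / 2) *
      qbinom (j + m) k * qbinom (j + m + k) k *
      (q ^ (2 * k * (k - j)) * qbinom k j ^ 2 * qbinom (2 * j) j) = 0 :=
    fun k hk => by simp [qbinom_eq_zero_of_lt (mem_range.mp hk)]
  have hexp : 2 * (j + m) * m = 3 * m.choose 2 + m + 2 * m * j + (m + 1).choose 2 := by
    apply Nat.cast_injective (R := ℚ)
    push_cast [Nat.cast_choose_two]
    ring
  rw [show j + m + 1 = j + (m + 1) by ring, sum_range_add, sum_eq_zero hlow, zero_add,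
    sum_congr rfl fun i hi =>
      apery_summand_eq_mul_chuTerm (Nat.lt_succ_iff.mp (mem_range.mp hi)) j,
    ← mul_sum, sum_chuTerm, eq_div_of_mul_eq (qfac_ne_zero _) (prod_X_pow_sub_mul_qfac m (2 * j)),
    qbinom_eq_div (by omega : j ≤ j + m), qbinom_eq_div (by omega : j ≤ j + m + j),
    Nat.add_sub_cancel_left, Nat.add_sub_cancel, show j + m + j = m + 2 * j by ring, hexp]
  field_simp [qfac_ne_zero]
  ring

theorem gq_eq_sum_range {k n : ℕ} (h : k ≤ n) (x : RatFunc ℚ) :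
    gq x k = ∑ j ∈ range (n + 1),
      q ^ (2 * k * (k - j)) * qbinom k j ^ 2 * qbinom (2 * j) j * x ^ j := by
  refine sum_subset (range_subset_range.mpr (by omega)) fun j _ hj => ?_
  simp [qbinom_eq_zero_of_lt (not_lt.mp (mt mem_range.mpr hj))]

end

theorem q_apery_identity (n : ℕ) (x : RatFunc ℚ) :
    Aq x n = ∑ k ∈ Finset.range (n + 1),
      (-1 : RatFunc ℚ) ^ (n - k) * RatFunc.X ^ ((n - k) * (5 * n + 3 * k + 1) / 2) *
        qbinom n k * qbinom (n + k) k * gq x k := by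
  rw [sum_congr rfl fun k hk => by rw [gq_eq_sum_range (Nat.lt_succ_iff.mp (mem_range.mp hk))]]
  simp_rw [mul_sum]
  rw [sum_comm, Aq]
  refine sum_congr rfl fun j hj => ?_
  obtain ⟨m, rfl⟩ := Nat.exists_eq_add_of_le (Nat.lt_succ_iff.mp (mem_range.mp hj))
  rw [sum_congr rfl fun k _ => (mul_assoc _ _ (x ^ j)).symm, ← sum_mul, sum_apery_summand,
    Nat.add_sub_cancel_left]
end

section
/- For every positive integer n, n³ divides ∑_{k=0}^{n-1} (−1)^k·(6k³ + 9k² + 5k + 1)·A_k. -/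
/-!
Write `b n k = C(n,k) C(n+k,k)`, so that `A n = ∑ₖ (b n k)²`, and put
`d n = ∑ₖ b n k · b (n+1) k`. Creative telescoping in `k` gives the recurrence
`(6n³ + 9n² + 5n + 1) A n = (n+1)³ d n + n³ d (n-1)` for `n ≥ 1`. With the alternating signs
the partial sums then telescope as well:
`∑_{k<n} (-1)^k (6k³ + 9k² + 5k + 1) A k = (-1)^(n-1) n³ d (n-1)`.
-/

/-- The Apéry numbers `A n = ∑_{k=0}^n (n choose k)² (n+k choose k)²`. -/
def apery (n : ℕ) : ℤ :=
  ∑ k ∈ Finset.range (n + 1), (n.choose k : ℤ) ^ 2 * ((n + k).choose k : ℤ) ^ 2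

open Finset

def aperyBinom (n k : ℕ) : ℤ := n.choose k * (n + k).choose k

lemma aperyBinom_eq_zero_of_lt {n k : ℕ} (h : n < k) : aperyBinom n k = 0 := by
  simp [aperyBinom, Nat.choose_eq_zero_of_lt h]

lemma apery_eq_sum_aperyBinom_sq (n : ℕ) :
    apery n = ∑ k ∈ range (n + 1), aperyBinom n k ^ 2 := by
  simp only [apery, aperyBinom, mul_pow]

lemma sub_mul_aperyBinom_succ (n k : ℕ) :
    ((n : ℤ) + 1 - k) * aperyBinom (n + 1) k = ((n : ℤ) + 1 + k) * aperyBinom n k := by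
  rcases lt_or_ge (n + 1) k with h | h
  · simp [aperyBinom_eq_zero_of_lt h, aperyBinom_eq_zero_of_lt (Nat.lt_of_succ_lt h)]
  have h₁ : (n.choose k : ℤ) * (n + 1) = (n + 1).choose k * ((n : ℤ) + 1 - k) := by
    exact_mod_cast Nat.choose_mul_succ_eq n k
  have h₂ : ((n + k).choose k : ℤ) * (n + k + 1) = (n + 1 + k).choose k * ((n : ℤ) + 1) := by
    have := Nat.choose_mul_succ_eq (n + k) k
    rw [show n + k + 1 - k = n + 1 by omega, show n + k + 1 = n + 1 + k by omega] at this
    rw [show (n : ℤ) + k + 1 = ((n + 1 + k : ℕ) : ℤ) by push_cast; ring]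
    exact_mod_cast this
  refine mul_left_cancel₀ (show ((n : ℤ) + 1) ≠ 0 by positivity) ?_
  simp only [aperyBinom]
  linear_combination -((n + 1).choose k * ((n : ℤ) + 1 - k)) * h₂
    - ((n + k).choose k * ((n : ℤ) + k + 1)) * h₁

lemma sq_mul_aperyBinom_succ (n k : ℕ) :
    ((k : ℤ) + 1) ^ 2 * aperyBinom n (k + 1)
      = ((n : ℤ) - k) * (n + k + 1) * aperyBinom n k := by
  rcases lt_or_ge n k with h | h
  · simp [aperyBinom_eq_zero_of_lt h, aperyBinom_eq_zero_of_lt (Nat.lt_succ_of_lt h)]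
  have h₁ : (n.choose (k + 1) : ℤ) * (k + 1) = n.choose k * ((n : ℤ) - k) := by
    exact_mod_cast Nat.choose_succ_right_eq n k
  have h₂ : ((n : ℤ) + k + 1) * (n + k).choose k
      = (n + (k + 1)).choose (k + 1) * ((k : ℤ) + 1) := by
    exact_mod_cast Nat.add_one_mul_choose_eq (n + k) k
  simp only [aperyBinom]
  linear_combination ((n + (k + 1)).choose (k + 1) * ((k : ℤ) + 1)) * h₁
    - (n.choose k * ((n : ℤ) - k)) * h₂

/-- The telescoping certificate of the recurrence, as produced by Zeilberger's algorithm
(the factor `k ^ 2` makes the junk value of `k - 1` at `k = 0` harmless). -/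
def aperyCertificate (n k : ℕ) : ℤ :=
  2 * (2 * n + 1) * k ^ 2 * aperyBinom n k * aperyBinom n (k - 1)

lemma aperyCertificate_zero (n : ℕ) : aperyCertificate n 0 = 0 := by
  simp [aperyCertificate]

lemma aperyCertificate_succ (n k : ℕ) :
    aperyCertificate n (k + 1)
      = 2 * (2 * n + 1) * ((k : ℤ) + 1) ^ 2 * aperyBinom n (k + 1) * aperyBinom n k := by
  simp [aperyCertificate]

lemma aperyCertificate_mul (n k : ℕ) :
    aperyCertificate n k * (((n : ℤ) + 1 - k) * (n + k))
      = 2 * (2 * n + 1) * k ^ 4 * aperyBinom n k ^ 2 := by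
  cases k with
  | zero => simp [aperyCertificate_zero]
  | succ j =>
    rw [aperyCertificate_succ]
    push_cast
    linear_combination (-2 * (2 * (n : ℤ) + 1) * ((j : ℤ) + 1) ^ 2 * aperyBinom n (j + 1))
      * sq_mul_aperyBinom_succ n j

lemma aperyBinom_sq_telescope (m k : ℕ) (hk : k ≤ m + 1) :
    (6 * ((m : ℤ) + 1) ^ 3 + 9 * ((m : ℤ) + 1) ^ 2 + 5 * ((m : ℤ) + 1) + 1)
        * aperyBinom (m + 1) k ^ 2
      = ((m : ℤ) + 2) ^ 3 * aperyBinom (m + 1) k * aperyBinom (m + 2) k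
        + ((m : ℤ) + 1) ^ 3 * aperyBinom m k * aperyBinom (m + 1) k
        + (aperyCertificate (m + 1) (k + 1) - aperyCertificate (m + 1) k) := by
  -- Multiplying by the product in `hD` clears the denominators of the hypergeometric ratios,
  -- turning every term into a polynomial multiple of `aperyBinom (m + 1) k ^ 2`.
  have hD : ((m : ℤ) + 2 - k) * (m + 1 + k) ≠ 0 := by
    apply mul_ne_zero <;> omega
  have hup := sub_mul_aperyBinom_succ (m + 1) k
  have hdown := sub_mul_aperyBinom_succ m k
  have hshift := sq_mul_aperyBinom_succ (m + 1) k
  have hcert := aperyCertificate_mul (m + 1) k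
  rw [aperyCertificate_succ]
  push_cast at hup hdown hshift hcert ⊢
  refine mul_left_cancel₀ hD ?_
  linear_combination (-((m : ℤ) + 2) ^ 3 * (m + 1 + k) * aperyBinom (m + 1) k) * hup
    + (((m : ℤ) + 1) ^ 3 * (m + 2 - k) * aperyBinom (m + 1) k) * hdown
    - (2 * (2 * (m : ℤ) + 3) * (((m : ℤ) + 2 - k) * (m + 1 + k)) * aperyBinom (m + 1) k)
      * hshift
    + hcert

def aperyCofactor (n : ℕ) : ℤ :=
  ∑ k ∈ range (n + 1), aperyBinom n k * aperyBinom (n + 1) k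

lemma sum_range_aperyCertificate_sub (n : ℕ) :
    ∑ k ∈ range (n + 1), (aperyCertificate n (k + 1) - aperyCertificate n k) = 0 := by
  rw [sum_range_sub, aperyCertificate_zero, aperyCertificate_succ,
    aperyBinom_eq_zero_of_lt n.lt_succ_self]
  simp

lemma apery_recurrence (m : ℕ) :
    (6 * ((m : ℤ) + 1) ^ 3 + 9 * ((m : ℤ) + 1) ^ 2 + 5 * ((m : ℤ) + 1) + 1) * apery (m + 1)
      = ((m : ℤ) + 2) ^ 3 * aperyCofactor (m + 1) + ((m : ℤ) + 1) ^ 3 * aperyCofactor m := by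
  have hcof : aperyCofactor m = ∑ k ∈ range (m + 2), aperyBinom m k * aperyBinom (m + 1) k := by
    rw [sum_range_succ, aperyBinom_eq_zero_of_lt m.lt_succ_self, zero_mul, add_zero,
      aperyCofactor]
  calc _ = ∑ k ∈ range (m + 2),
          (((m : ℤ) + 2) ^ 3 * aperyBinom (m + 1) k * aperyBinom (m + 2) k
            + ((m : ℤ) + 1) ^ 3 * aperyBinom m k * aperyBinom (m + 1) k
            + (aperyCertificate (m + 1) (k + 1) - aperyCertificate (m + 1) k)) := by
        rw [apery_eq_sum_aperyBinom_sq, mul_sum]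
        exact sum_congr rfl fun k hk =>
          aperyBinom_sq_telescope m k (Nat.lt_succ_iff.mp (mem_range.mp hk))
    _ = _ := by
        rw [sum_add_distrib, sum_range_aperyCertificate_sub, add_zero, sum_add_distrib, hcof,
          aperyCofactor]
        simp only [mul_sum, mul_assoc]

lemma sum_range_succ_alternating_apery (m : ℕ) :
    ∑ k ∈ range (m + 1),
      (-1 : ℤ) ^ k * (6 * (k : ℤ) ^ 3 + 9 * (k : ℤ) ^ 2 + 5 * (k : ℤ) + 1) * apery k
      = (-1) ^ m * ((m : ℤ) + 1) ^ 3 * aperyCofactor m := by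
  induction m with
  | zero => simp [apery, aperyCofactor, aperyBinom]
  | succ m ih =>
    rw [sum_range_succ, ih]
    push_cast
    linear_combination (-1 : ℤ) ^ (m + 1) * apery_recurrence m

theorem cube_dvd_sum_apery_general (n : ℕ) :
    (n : ℤ) ^ 3 ∣ ∑ k ∈ Finset.range n,
      (-1 : ℤ) ^ k * (6 * (k : ℤ) ^ 3 + 9 * (k : ℤ) ^ 2 + 5 * (k : ℤ) + 1) * apery k := by
  cases n with
  | zero => simp
  | succ m =>
    rw [sum_range_succ_alternating_apery]
    exact ⟨(-1) ^ m * aperyCofactor m, by push_cast; ring⟩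

theorem cube_dvd_sum_apery (n : ℕ) (hn : 0 < n) :
    (n : ℤ) ^ 3 ∣ ∑ k ∈ Finset.range n,
      (-1 : ℤ) ^ k * (6 * (k : ℤ) ^ 3 + 9 * (k : ℤ) ^ 2 + 5 * (k : ℤ) + 1) * apery k :=
  cube_dvd_sum_apery_general n
end
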